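/- arXiv:math/9606228 — 2 statements merged into one kernel-verified Lean document; each statement's English description precedes it below -/
import Mathlib

section
/- For any poset P and any set S ⊆ P, the relation ≤ on R_S(P) is reflexive, transitive, and antisymmetric; that is, R_S(P) is a partially ordered set. -/
/-! A branch through `ν` first meets the front of `r₁ ≤ r₂` at some `h₂(p₁)` with `p₁`
maximal among the elements of `dom h₂` compatible with `q`; the front of `r₂ ≤ r₃` above
`h₂(p₁)` then supplies the front of `r₁ ≤ r₃`, because `p ≤ p₁`. Antisymmetry holds since
`h¹ ⊆ h²` and `w¹ ⊆ w²` in both directions. -/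

/-- Restriction `η↾k` of `η ∈ 2^ω` to its first `k` entries, as a finite binary sequence. -/
def restrict (η : ℕ → Bool) (k : ℕ) : List Bool := List.ofFn (fun i : Fin k => η i)

/-- `J ⊆ 2^{<ω}` contains a front above `ν`: every branch of Cantor space extending `ν`
has a restriction belonging to `J`. -/
def FrontAbove (J : Set (List Bool)) (ν : List Bool) : Prop :=
  ∀ η : ℕ → Bool, restrict η ν.length = ν → ∃ k : ℕ, restrict η k ∈ J

/-- Compatibility in a forcing notion: a common upper bound exists. -/
def PCompat {P : Type} (le : P → P → Prop) (p q : P) : Prop :=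
  ∃ r, le p r ∧ le q r

/-- Conditions of the forcing notion `R_S(P)`: pairs `⟨h, w⟩` where `h` is a finite partial
function from `S` to `2^{<ω}` such that compatible elements of `dom h` are comparable and
`h` is monotone (with respect to end-extension), and `w` is a finite subset of `P`. -/
structure RCond (P : Type) [PartialOrder P] (S : Set P) where
  /-- the finite partial function, coded with values in `Option (List Bool)` -/
  h : P → Option (List Bool)
  /-- the finite side set -/
  w : Finset P
  dom_finite : {p : P | h p ≠ none}.Finite
  dom_subset : ∀ p : P, h p ≠ none → p ∈ S
  dom_comparable : ∀ p₁ p₂ : P, h p₁ ≠ none → h p₂ ≠ none →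
    PCompat (· ≤ ·) p₁ p₂ → p₁ ≤ p₂ ∨ p₂ ≤ p₁
  mono : ∀ (p₁ p₂ : P) (ν₁ ν₂ : List Bool),
    h p₁ = some ν₁ → h p₂ = some ν₂ → p₁ ≤ p₂ → ν₁ <+: ν₂

/-- The order of `R_S(P)`. -/
def RCond.le {P : Type} [PartialOrder P] {S : Set P} (r₁ r₂ : RCond P S) : Prop :=
  (∀ (p : P) (ν : List Bool), r₁.h p = some ν → r₂.h p = some ν) ∧
  r₁.w ⊆ r₂.w ∧
  ∀ q ∈ r₁.w, ∀ (p : P) (ν : List Bool), r₁.h p = some ν →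
    PCompat (· ≤ ·) p q →
    (¬ ∃ p' : P, r₁.h p' ≠ none ∧ p ≤ p' ∧ p ≠ p' ∧ PCompat (· ≤ ·) p' q) →
    FrontAbove
      {μ : List Bool | ∃ p₁ : P, r₂.h p₁ = some μ ∧ p ≤ p₁ ∧ PCompat (· ≤ ·) p₁ q ∧
        ∀ p₂ : P, r₂.h p₂ ≠ none → p₁ ≤ p₂ → p₁ ≠ p₂ → ¬ PCompat (· ≤ ·) p₂ q} ν

@[simp]
theorem restrict_length (η : ℕ → Bool) (k : ℕ) : (restrict η k).length = k := by
  simp [restrict]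

namespace FrontAbove

variable {J K : Set (List Bool)} {ν : List Bool}

theorem of_mem (hν : ν ∈ J) : FrontAbove J ν :=
  fun η hη => ⟨ν.length, by rwa [hη]⟩

theorem mono (hJK : J ⊆ K) (hJ : FrontAbove J ν) : FrontAbove K ν := fun η hη =>
  let ⟨k, hk⟩ := hJ η hη
  ⟨k, hJK hk⟩

theorem trans (hJ : FrontAbove J ν) (hK : ∀ μ ∈ J, FrontAbove K μ) : FrontAbove K ν := by
  intro η hη
  obtain ⟨k, hk⟩ := hJ η hη
  exact hK _ hk η (by rw [restrict_length])

end FrontAbove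

namespace RCond

variable {P : Type} [PartialOrder P] {S : Set P}

def IsMaxCompat (r : RCond P S) (p q : P) : Prop :=
  PCompat (· ≤ ·) p q ∧
    ∀ p' : P, r.h p' ≠ none → p ≤ p' → p ≠ p' → ¬ PCompat (· ≤ ·) p' q

/-- The set `J_{p,q}` of the paper, computed in `r`. -/
def frontSet (r : RCond P S) (p q : P) : Set (List Bool) :=
  {μ | ∃ p₁ : P, r.h p₁ = some μ ∧ p ≤ p₁ ∧ r.IsMaxCompat p₁ q}

theorem le_iff {r₁ r₂ : RCond P S} :
    r₁.le r₂ ↔ (∀ (p : P) (ν : List Bool), r₁.h p = some ν → r₂.h p = some ν) ∧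
      r₁.w ⊆ r₂.w ∧
      ∀ q ∈ r₁.w, ∀ (p : P) (ν : List Bool), r₁.h p = some ν → r₁.IsMaxCompat p q →
        FrontAbove (r₂.frontSet p q) ν := by
  simp only [RCond.le, IsMaxCompat, frontSet, not_exists, not_and]
  constructor
  · rintro ⟨hh, hw, hf⟩
    exact ⟨hh, hw, fun q hq p ν hp hmax => hf q hq p ν hp hmax.1 hmax.2⟩
  · rintro ⟨hh, hw, hf⟩
    exact ⟨hh, hw, fun q hq p ν hp hpq hmax => hf q hq p ν hp ⟨hpq, hmax⟩⟩

theorem frontSet_anti {r : RCond P S} {p p' q : P} (hp : p ≤ p') :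
    r.frontSet p' q ⊆ r.frontSet p q := by
  rintro μ ⟨p₁, hμ, hp'p₁, hmax⟩
  exact ⟨p₁, hμ, hp.trans hp'p₁, hmax⟩

theorem mem_frontSet_self {r : RCond P S} {p q : P} {ν : List Bool} (hp : r.h p = some ν)
    (hmax : r.IsMaxCompat p q) : ν ∈ r.frontSet p q :=
  ⟨p, hp, le_rfl, hmax⟩

theorem ext {r₁ r₂ : RCond P S} (hh : r₁.h = r₂.h) (hw : r₁.w = r₂.w) : r₁ = r₂ := by
  cases r₁
  cases r₂
  cases hh
  cases hw
  rfl

theorem le_refl (r : RCond P S) : r.le r :=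
  le_iff.2 ⟨fun _ _ hp => hp, subset_rfl, fun _ _ _ _ hp hmax =>
    FrontAbove.of_mem (mem_frontSet_self hp hmax)⟩

theorem le_trans {r₁ r₂ r₃ : RCond P S} (h₁₂ : r₁.le r₂) (h₂₃ : r₂.le r₃) : r₁.le r₃ := by
  obtain ⟨hh₁₂, hw₁₂, hf₁₂⟩ := le_iff.1 h₁₂
  obtain ⟨hh₂₃, hw₂₃, hf₂₃⟩ := le_iff.1 h₂₃
  refine le_iff.2 ⟨fun p ν hp => hh₂₃ p ν (hh₁₂ p ν hp), hw₁₂.trans hw₂₃, ?_⟩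
  intro q hq p ν hp hmax
  refine (hf₁₂ q hq p ν hp hmax).trans ?_
  rintro μ ⟨p₁, hμ, hpp₁, hmax₁⟩
  exact (hf₂₃ q (hw₁₂ hq) p₁ μ hμ hmax₁).mono (frontSet_anti hpp₁)

theorem le_antisymm {r₁ r₂ : RCond P S} (h₁₂ : r₁.le r₂) (h₂₁ : r₂.le r₁) : r₁ = r₂ :=
  ext (funext fun p => Option.ext fun ν => ⟨h₁₂.1 p ν, h₂₁.1 p ν⟩)
    (subset_antisymm h₁₂.2.1 h₂₁.2.1)

end RCond

/-- For any poset `P` and any `S ⊆ P`, the relation `≤` on `R_S(P)` is reflexive,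
transitive and antisymmetric, i.e. `R_S(P)` is a partially ordered set. -/
theorem rcond_partial_order (P : Type) [PartialOrder P] (S : Set P) :
    (∀ r : RCond P S, RCond.le r r) ∧
    (∀ r₁ r₂ r₃ : RCond P S, RCond.le r₁ r₂ → RCond.le r₂ r₃ → RCond.le r₁ r₃) ∧
    (∀ r₁ r₂ : RCond P S, RCond.le r₁ r₂ → RCond.le r₂ r₁ → r₁ = r₂) :=
  ⟨RCond.le_refl, fun _ _ _ => RCond.le_trans, fun _ _ => RCond.le_antisymm⟩
end

section
/- For any poset P and any countable set S ⊆ P, the forcing notion R_S(P) is σ-centered; in fact, any finite set of conditions of R_S(P) all having the same first coordinate h has a common upper bound. -/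
/-- A forcing notion is σ-centered if it is the union of countably many centered subsets,
where a subset is centered if each of its finite subsets has a common upper bound. -/
def PSigmaCentered {P : Type} (le : P → P → Prop) : Prop :=
  ∃ C : ℕ → Set P, (∀ p, ∃ n, p ∈ C n) ∧
    ∀ n, ∀ F : Finset P, ↑F ⊆ C n → ∃ r, ∀ p ∈ F, le p r

/-!
Two conditions with the same first coordinate `h` are extended by `⟨h, w₁ ∪ w₂⟩`: for `q ∈ w₁`
and `p` maximal in `dom h` among those compatible with `q`, the value `h p` itself already lies
in `J_{p,q}`, so that set trivially contains a front above `h p`. Hence each fibre of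
`r ↦ r.h` is centered, and there are only countably many possible `h`, being finite partial
functions from the countable set `S` to the countable set `2^{<ω}`.
-/

theorem frontAbove_of_mem {J : Set (List Bool)} {ν : List Bool} (hν : ν ∈ J) :
    FrontAbove J ν :=
  fun η hη => ⟨ν.length, by rwa [hη]⟩

theorem PSigmaCentered.of_countable_range {α β : Type} [Nonempty α] (le : α → α → Prop)
    (f : α → β) (hf : (Set.range f).Countable)
    (hcentered : ∀ F : Finset α, (∀ a ∈ F, ∀ b ∈ F, f a = f b) → ∃ r, ∀ a ∈ F, le a r) :
    PSigmaCentered le := by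
  obtain ⟨g, hg⟩ := hf.exists_eq_range (Set.range_nonempty f)
  refine ⟨fun n => f ⁻¹' {g n}, fun a => ?_, fun n F hF => hcentered F ?_⟩
  · obtain ⟨n, hn⟩ : f a ∈ Set.range g := hg ▸ Set.mem_range_self a
    exact ⟨n, hn.symm⟩
  · intro a ha b hb
    rw [show f a = g n from hF ha, show f b = g n from hF hb]

theorem Set.countable_setOf_finite_dom {α β : Type} [Countable β] {S : Set α}
    (hS : S.Countable) :
    {g : α → Option β | {a | g a ≠ none}.Finite ∧ ∀ a, g a ≠ none → a ∈ S}.Countable := by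
  let graph : (α → Option β) → Set (α × β) := fun g => {x | g x.1 = some x.2}
  have graph_injective : Function.Injective graph := fun g₁ g₂ hg =>
    funext fun a => Option.ext fun b => Set.ext_iff.1 hg (a, b)
  refine ((countable_ofPred_finite_subset (hS.prod countable_univ)).preimage
    graph_injective).mono ?_
  rintro g ⟨hfin, hdom⟩
  constructor
  · refine Set.Finite.of_finite_image (f := Prod.fst) (hfin.subset ?_) ?_
    · rintro _ ⟨⟨a, b⟩, hab, rfl⟩
      simp [show g a = some b from hab]
    · rintro ⟨a, b₁⟩ (h₁ : g a = some b₁) ⟨a', b₂⟩ (h₂ : g a' = some b₂) (rfl : a = a')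
      rw [Option.some_inj.1 (h₁.symm.trans h₂)]
  · rintro ⟨a, b⟩ (hab : g a = some b)
    exact ⟨hdom a (by simp [hab]), trivial⟩

namespace RCond

variable {P : Type} [PartialOrder P] {S : Set P}

instance : Inhabited (RCond P S) :=
  ⟨⟨fun _ => none, ∅, by simp, by simp, by simp, by simp⟩⟩

theorem le_of_h_eq_of_w_subset {r₁ r₂ : RCond P S} (hh : r₁.h = r₂.h) (hw : r₁.w ⊆ r₂.w) :
    r₁.le r₂ := by
  refine ⟨fun p ν hp => hh ▸ hp, hw, ?_⟩
  intro q _ p ν hpν hcompat hmax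
  refine frontAbove_of_mem ⟨p, hh ▸ hpν, le_rfl, hcompat, ?_⟩
  intro p₂ hp₂ hle hne hc
  exact hmax ⟨p₂, hh ▸ hp₂, hle, hne, hc⟩

theorem exists_le_of_h_eq (F : Finset (RCond P S)) (hF : ∀ r₁ ∈ F, ∀ r₂ ∈ F, r₁.h = r₂.h) :
    ∃ r : RCond P S, ∀ r' ∈ F, r'.le r := by
  classical
  rcases F.eq_empty_or_nonempty with rfl | ⟨r₀, hr₀⟩
  · exact ⟨default, by simp⟩
  · exact ⟨{ r₀ with w := F.sup RCond.w }, fun r' hr' =>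
      le_of_h_eq_of_w_subset (hF r' hr' r₀ hr₀) (Finset.le_sup (f := RCond.w) hr')⟩

theorem countable_range_h (hS : S.Countable) :
    (Set.range (RCond.h : RCond P S → P → Option (List Bool))).Countable :=
  (Set.countable_setOf_finite_dom hS).mono <| by
    rintro _ ⟨r, rfl⟩
    exact ⟨r.dom_finite, r.dom_subset⟩

end RCond

/-- For a countable `S ⊆ P`: any finite set of conditions of `R_S(P)` having the same first
coordinate `h` has a common upper bound, and consequently `R_S(P)` is σ-centered. -/
theorem rcond_sigma_centered (P : Type) [PartialOrder P] (S : Set P) (hS : S.Countable) :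
    (∀ F : Finset (RCond P S),
        (∀ r₁ ∈ F, ∀ r₂ ∈ F, r₁.h = r₂.h) → ∃ r : RCond P S, ∀ r' ∈ F, RCond.le r' r) ∧
      PSigmaCentered (RCond.le (P := P) (S := S)) :=
  ⟨RCond.exists_le_of_h_eq, PSigmaCentered.of_countable_range _ RCond.h
    (RCond.countable_range_h hS) RCond.exists_le_of_h_eq⟩
end
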